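/- For every n^d × n^d matrix M over a field F, PT-rank(M) = n^{d+1} · ρ(PaddedTensor(M)), where PaddedTensor(M) : [n]^{2d+2} → F is defined by PaddedTensor(M)(p, i_1, j_1, i_2, …, j_{d−1}, i_d, j_d, q) = 1[p = q = 1] · M_{(i_1,…,i_d),(j_1,…,j_d)}. -/

import Mathlib

open Matrix BigOperators

/-- The `κ`-partial transpose of an `n^d × n^d` matrix (indexed by tuples in `[n]^d`). -/
def ptrans {F : Type*} [Field F] {n d : ℕ} (κ : Finset (Fin d))
    (M : Matrix (Fin d → Fin n) (Fin d → Fin n) F) :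
    Matrix (Fin d → Fin n) (Fin d → Fin n) F :=
  fun i j => M (fun k => if k ∈ κ then j k else i k) (fun k => if k ∈ κ then i k else j k)

/-- A matrix is PT-basic if some partial transpose of it has rank 1. -/
def IsPTBasic {F : Type*} [Field F] {n d : ℕ}
    (M : Matrix (Fin d → Fin n) (Fin d → Fin n) F) : Prop :=
  ∃ κ : Finset (Fin d), (ptrans κ M).rank = 1

/-- The PT-rank of `M`: the minimum number of PT-basic matrices summing to `M`. -/
noncomputable def PTrank {F : Type*} [Field F] {n d : ℕ}
    (M : Matrix (Fin d → Fin n) (Fin d → Fin n) F) : ℕ :=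
  sInf { r | ∃ P : Fin r → Matrix (Fin d → Fin n) (Fin d → Fin n) F,
    (∀ i, IsPTBasic (P i)) ∧ M = ∑ i, P i }

/-- Membership function of the row-index set `I_{a,α,b} ⊆ [2d]` (here `d = e+1`,
0-indexed coordinates `0,…,2e+1` standing for `1,…,2d`): coordinate `1` (i.e. `t = 0`)
belongs to `I` iff `a = 1`; coordinate `2d` (i.e. `t = 2e+1`) belongs to `I` iff `b = 0`;
and for `k ∈ [d-1]` exactly one of the coordinates `2k, 2k+1` belongs to `I`, as selected
by `α_k`. -/
def ptI (e : ℕ) (a b : Bool) (α : Fin e → Bool) : Finset (Fin (2 * e + 2)) :=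
  Finset.univ.filter fun t =>
    (if _h0 : (t : ℕ) = 0 then a
     else if _hl : (t : ℕ) = 2 * e + 1 then !b
     else (α ⟨((t : ℕ) - 1) / 2, by have := t.isLt; omega⟩ ==
        decide (((t : ℕ) - 1) % 2 = 1))) = true

/-- The matrix flattening `Mat_{S,Sᶜ}(A)` of an order-`m` tensor, with rows reading the
coordinates in `S` and columns the coordinates in the complement.  (Rows and columns are
indexed by full assignments, which duplicates rows/columns but preserves the rank.) -/
def flat {F : Type*} [Field F] {n m : ℕ} (S : Finset (Fin m)) (A : (Fin m → Fin n) → F) :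
    Matrix (Fin m → Fin n) (Fin m → Fin n) F :=
  fun x y => A (fun t => if t ∈ S then x t else y t)

/-- The relative rank `relrk_{a,α,b}(A) = n^{-d} · rank(Mat_{I_{a,α,b},J_{a,α,b}}(A))`
of an order-`2d` tensor (`d = e+1`). -/
noncomputable def relrk {F : Type*} [Field F] (n e : ℕ) (a b : Bool) (α : Fin e → Bool)
    (A : (Fin (2 * e + 2) → Fin n) → F) : ℝ :=
  ((flat (ptI e a b α) A).rank : ℝ) / (n : ℝ) ^ (e + 1)

/-- The complexity measure
`ρ(A) = max_{a,b} min_{{X_α} ⊢ A} ∑_α relrk_{a,α,b}(X_α)` on order-`2d` tensors. -/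
noncomputable def rho {F : Type*} [Field F] (n e : ℕ)
    (A : (Fin (2 * e + 2) → Fin n) → F) : ℝ :=
  ⨆ a : Bool, ⨆ b : Bool,
    sInf { r : ℝ | ∃ X : (Fin e → Bool) → ((Fin (2 * e + 2) → Fin n) → F),
      (∑ α, X α) = A ∧ r = ∑ α, relrk n e a b α (X α) }

/-- The padded order-`(2d+2)` tensor of an `n^d × n^d` matrix:
`PaddedTensor(M)(p, i_1, j_1, …, i_d, j_d, q) = 1[p = q = 1] · M_{(i…),(j…)}`. -/
def padded {F : Type*} [Field F] {n d : ℕ} [NeZero n]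
    (M : Matrix (Fin d → Fin n) (Fin d → Fin n) F) : (Fin (2 * d + 2) → Fin n) → F :=
  fun x =>
    if x ⟨0, by omega⟩ = 0 ∧ x ⟨2 * d + 1, by omega⟩ = 0 then
      M (fun k => x ⟨2 * (k : ℕ) + 1, by have := k.isLt; omega⟩)
        (fun k => x ⟨2 * (k : ℕ) + 2, by have := k.isLt; omega⟩)
    else 0

/-!
For every choice of `a, b` the inner minimum in `ρ(PaddedTensor(M))` equals
`PT-rank(M) / n^{d+1}`. Given any decomposition `∑_α X_α` of the padded tensor, the slices
`p = q = 1` of the `X_α` sum to `M`, and the partial transpose along `κ = {k | α_k}` of the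
slice of `X_α` is a submatrix of the `α`-flattening of `X_α`; splitting each partial transpose
into rank-one matrices gives `PT-rank(M) ≤ ∑_α rank`. Conversely, grouping an optimal
PT-decomposition of `M` by the set `κ` and padding each group gives a decomposition whose
`α`-flattenings are, up to a mask that depends only on the row and one that depends only on the
column, reindexed partial transposes.
-/

namespace Matrix
variable {F : Type*} [Field F] {m n : Type*} [Fintype n]

theorem rank_add_le (A B : Matrix m n F) : (A + B).rank ≤ A.rank + B.rank := by
  rw [rank, rank, rank, mulVecLin_add]
  calc _ ≤ Module.finrank F ↥(LinearMap.range A.mulVecLin ⊔ LinearMap.range B.mulVecLin) :=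
        Submodule.finrank_mono (LinearMap.range_add_le _ _)
    _ ≤ _ := Submodule.finrank_add_le_finrank_add_finrank _ _

theorem rank_sum_le {ι : Type*} (s : Finset ι) (A : ι → Matrix m n F) :
    (∑ i ∈ s, A i).rank ≤ ∑ i ∈ s, (A i).rank :=
  Finset.le_sum_of_subadditive (fun B : Matrix m n F => B.rank) rank_zero.le rank_add_le s A

theorem exists_rank_one_sum_eq [Fintype m] (A : Matrix m n F) :
    ∃ B : Fin A.rank → Matrix m n F, (∀ k, (B k).rank = 1) ∧ ∑ k, B k = A := by
  let V := Submodule.span F (Set.range A.col)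
  let b : Module.Basis (Fin A.rank) F V :=
    Module.finBasisOfFinrankEq F V (rank_eq_finrank_span_cols A).symm
  have hcol : ∀ j, A.col j ∈ V := fun j => Submodule.subset_span ⟨j, rfl⟩
  let B : Fin A.rank → Matrix m n F :=
    fun k => vecMulVec (b k : m → F) (fun j => b.repr ⟨A.col j, hcol j⟩ k)
  have hsum : ∑ k, B k = A := by
    ext i j
    have := congrFun (congrArg Subtype.val (b.sum_repr ⟨A.col j, hcol j⟩)) i
    simp only [Submodule.coe_sum, Submodule.coe_smul, Finset.sum_apply, Pi.smul_apply,
      smul_eq_mul] at this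
    simpa [B, Matrix.sum_apply, vecMulVec_apply, mul_comm] using this
  -- `rank A` summands of rank `≤ 1` add up to rank `rank A`, so none of them has rank `0`.
  have hle : ∀ k ∈ Finset.univ, (B k).rank ≤ 1 := fun k _ => rank_vecMulVec_le _ _
  have hge : ∑ _k : Fin A.rank, 1 ≤ ∑ k, (B k).rank := by
    simpa [hsum] using rank_sum_le Finset.univ B
  exact ⟨B, fun k => (Finset.sum_eq_sum_iff_of_le hle).mp
    (le_antisymm (Finset.sum_le_sum hle) hge) k (Finset.mem_univ k), hsum⟩

theorem rank_le_of_apply_eq_mul [Fintype m] [DecidableEq m] [DecidableEq n] {m' n' : Type*}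
    [Fintype n'] {A : Matrix m n F} {B : Matrix m' n' F} (e : m → F) (f : n → F) (r : m → m')
    (c : n → n') (h : ∀ x y, A x y = e x * B (r x) (c y) * f y) : A.rank ≤ B.rank := by
  have hA : A = diagonal e * B.submatrix r c * diagonal f := by
    ext x y
    simp [h]
  rw [hA]
  exact (rank_mul_le_left _ _).trans ((rank_mul_le_right _ _).trans (rank_submatrix_le _ _ _))

end Matrix

def trueSet {d : ℕ} (α : Fin d → Bool) : Finset (Fin d) := Finset.univ.filter fun k => α k

@[simp] theorem mem_trueSet {d : ℕ} (α : Fin d → Bool) (k : Fin d) :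
    k ∈ trueSet α ↔ α k = true := by
  simp [trueSet]

theorem trueSet_decide_mem {d : ℕ} (κ : Finset (Fin d)) :
    trueSet (fun k => decide (k ∈ κ)) = κ := by
  ext k; simp

section PartialTranspose
variable {F : Type*} [Field F] {n d : ℕ}

@[simp]
theorem ptrans_ptrans (κ : Finset (Fin d)) (A : Matrix (Fin d → Fin n) (Fin d → Fin n) F) :
    ptrans κ (ptrans κ A) = A := by
  ext i j
  simp only [ptrans]
  congr 1 <;> funext k <;> split_ifs <;> rfl

theorem ptrans_sum {ι : Type*} (κ : Finset (Fin d)) (s : Finset ι)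
    (A : ι → Matrix (Fin d → Fin n) (Fin d → Fin n) F) :
    ptrans κ (∑ i ∈ s, A i) = ∑ i ∈ s, ptrans κ (A i) := by
  ext i j
  simp [ptrans, Matrix.sum_apply]

theorem PTrank_le_card {ι : Type*} [Fintype ι] {M : Matrix (Fin d → Fin n) (Fin d → Fin n) F}
    (P : ι → Matrix (Fin d → Fin n) (Fin d → Fin n) F) (hP : ∀ i, IsPTBasic (P i))
    (hM : M = ∑ i, P i) : PTrank M ≤ Fintype.card ι := by
  let e := Fintype.equivFin ι
  refine Nat.sInf_le ⟨fun t => P (e.symm t), fun t => hP _, ?_⟩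
  rw [hM]
  exact (Fintype.sum_equiv e.symm _ _ fun _ => rfl).symm

theorem PTrank_le_sum_rank_ptrans {ι : Type*} [Fintype ι]
    {M : Matrix (Fin d → Fin n) (Fin d → Fin n) F} (κ : ι → Finset (Fin d))
    (N : ι → Matrix (Fin d → Fin n) (Fin d → Fin n) F) (hN : ∑ i, N i = M) :
    PTrank M ≤ ∑ i, (ptrans (κ i) (N i)).rank := by
  choose B hB hsum using fun i => (ptrans (κ i) (N i)).exists_rank_one_sum_eq
  have hM : M = ∑ p : Σ i, Fin (ptrans (κ i) (N i)).rank, ptrans (κ p.1) (B p.1 p.2) := by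
    rw [← hN, Fintype.sum_sigma]
    refine Fintype.sum_congr _ _ fun i => ?_
    rw [← ptrans_sum (κ i), hsum, ptrans_ptrans]
  simpa using PTrank_le_card _ (fun p => ⟨κ p.1, by rw [ptrans_ptrans, hB]⟩) hM

theorem exists_isPTBasic_sum_eq (M : Matrix (Fin d → Fin n) (Fin d → Fin n) F) :
    ∃ P : Fin (PTrank M) → Matrix (Fin d → Fin n) (Fin d → Fin n) F,
      (∀ i, IsPTBasic (P i)) ∧ M = ∑ i, P i := by
  obtain ⟨B, hB, hsum⟩ := M.exists_rank_one_sum_eq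
  show PTrank M ∈ {r | ∃ P : Fin r → Matrix (Fin d → Fin n) (Fin d → Fin n) F,
    (∀ i, IsPTBasic (P i)) ∧ M = ∑ i, P i}
  exact Nat.sInf_mem ⟨_, B, fun k => ⟨∅, hB k⟩, hsum.symm⟩

theorem exists_sum_rank_ptrans_le_PTrank (M : Matrix (Fin d → Fin n) (Fin d → Fin n) F) :
    ∃ N : (Fin d → Bool) → Matrix (Fin d → Fin n) (Fin d → Fin n) F,
      ∑ α, N α = M ∧ ∑ α, (ptrans (trueSet α) (N α)).rank ≤ PTrank M := by
  obtain ⟨P, hP, hM⟩ := exists_isPTBasic_sum_eq M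
  choose κ hκ using hP
  let αOf : Fin (PTrank M) → Fin d → Bool := fun i k => decide (k ∈ κ i)
  refine ⟨fun α => ∑ i : {i // αOf i = α}, P i,
    (Fintype.sum_fiberwise αOf P).trans hM.symm, ?_⟩
  calc ∑ α, (ptrans (trueSet α) (∑ i : {i // αOf i = α}, P i)).rank
      ≤ ∑ α, ∑ i : {i // αOf i = α}, (ptrans (trueSet α) (P i)).rank :=
        Finset.sum_le_sum fun α _ => by
          rw [ptrans_sum]; exact Matrix.rank_sum_le _ _
    _ = ∑ α, ∑ _i : {i // αOf i = α}, 1 := by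
        refine Fintype.sum_congr _ _ fun α => Fintype.sum_congr _ _ ?_
        rintro ⟨i, rfl⟩
        simp only [αOf, trueSet_decide_mem, hκ]
    _ = ∑ _i : Fin (PTrank M), 1 := Fintype.sum_fiberwise αOf fun _ => (1 : ℕ)
    _ = PTrank M := by simp

end PartialTranspose

section Coordinates
variable {d : ℕ}

def padFirst : Fin (2 * d + 2) := ⟨0, by omega⟩
def padLast : Fin (2 * d + 2) := ⟨2 * d + 1, by omega⟩
def rowCoord (k : Fin d) : Fin (2 * d + 2) := ⟨2 * k + 1, by omega⟩
def colCoord (k : Fin d) : Fin (2 * d + 2) := ⟨2 * k + 2, by omega⟩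

theorem coord_cases (t : Fin (2 * d + 2)) :
    t = padFirst ∨ t = padLast ∨ (∃ k, t = rowCoord k) ∨ ∃ k, t = colCoord k := by
  obtain ⟨t, ht⟩ := t
  rcases Nat.even_or_odd' t with ⟨m, rfl | rfl⟩
  · rcases m with _ | m
    · exact Or.inl rfl
    · exact Or.inr <| Or.inr <| Or.inr ⟨⟨m, by omega⟩, by simp [colCoord]; ring⟩
  · by_cases hm : m < d
    · exact Or.inr <| Or.inr <| Or.inl ⟨⟨m, hm⟩, rfl⟩
    · exact Or.inr <| Or.inl <| by simp [padLast]; omega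

theorem funext_coord {β : Type*} {f g : Fin (2 * d + 2) → β}
    (hfirst : f padFirst = g padFirst) (hlast : f padLast = g padLast)
    (hrow : ∀ k, f (rowCoord k) = g (rowCoord k))
    (hcol : ∀ k, f (colCoord k) = g (colCoord k)) :
    f = g := by
  funext t
  rcases coord_cases t with rfl | rfl | ⟨k, rfl⟩ | ⟨k, rfl⟩
  exacts [hfirst, hlast, hrow k, hcol k]

variable (a b : Bool) (α : Fin d → Bool)

@[simp] theorem padFirst_mem_ptI : padFirst ∈ ptI d a b α ↔ a = true := by
  simp [ptI, padFirst]

@[simp] theorem padLast_mem_ptI : padLast ∈ ptI d a b α ↔ b = false := by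
  simp [ptI, padLast]

@[simp] theorem rowCoord_mem_ptI (k : Fin d) : rowCoord k ∈ ptI d a b α ↔ α k = false := by
  simp only [ptI, rowCoord, Finset.mem_filter, Finset.mem_univ, true_and]
  rw [dif_neg (by omega), dif_neg (by omega)]
  simp

@[simp] theorem colCoord_mem_ptI (k : Fin d) : colCoord k ∈ ptI d a b α ↔ α k = true := by
  simp only [ptI, colCoord, Finset.mem_filter, Finset.mem_univ, true_and]
  rw [dif_neg (by omega), dif_neg (by omega)]
  have hk : ((2 * (k : ℕ) + 2 - 1) / 2 : ℕ) = k := by omega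
  simp only [beq_iff_eq, hk, show (2 * (k : ℕ) + 2 - 1) % 2 = 1 by omega, decide_true]

end Coordinates

section PaddedTensor
variable {F : Type*} [Field F] {n d : ℕ} [NeZero n]

theorem padded_apply (M : Matrix (Fin d → Fin n) (Fin d → Fin n) F)
    (x : Fin (2 * d + 2) → Fin n) :
    padded M x = if x padFirst = 0 ∧ x padLast = 0 then
      M (fun k => x (rowCoord k)) (fun k => x (colCoord k)) else 0 := rfl

theorem padded_sum {ι : Type*} (s : Finset ι)
    (M : ι → Matrix (Fin d → Fin n) (Fin d → Fin n) F) :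
    padded (∑ i ∈ s, M i) = ∑ i ∈ s, padded (M i) := by
  funext x
  simp only [padded_apply, Matrix.sum_apply, Finset.sum_apply]
  split_ifs <;> simp

/-- The point `(0, i_1, j_1, …, i_d, j_d, 0)`, inverting the coordinate reading in `padded`. -/
def interleave (i j : Fin d → Fin n) (t : Fin (2 * d + 2)) : Fin n :=
  if h : 0 < (t : ℕ) ∧ (t : ℕ) < 2 * d + 1 then
    (if (t : ℕ) % 2 = 1 then i else j) ⟨((t : ℕ) - 1) / 2, by omega⟩
  else 0

@[simp] theorem interleave_padFirst (i j : Fin d → Fin n) : interleave i j padFirst = 0 := by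
  simp [interleave, padFirst]

@[simp] theorem interleave_padLast (i j : Fin d → Fin n) : interleave i j padLast = 0 := by
  simp [interleave, padLast]

@[simp] theorem interleave_rowCoord (i j : Fin d → Fin n) (k : Fin d) :
    interleave i j (rowCoord k) = i k := by
  simp [interleave, rowCoord]

@[simp] theorem interleave_colCoord (i j : Fin d → Fin n) (k : Fin d) :
    interleave i j (colCoord k) = j k := by
  have hk : ((colCoord k : Fin (2 * d + 2)) : ℕ) = 2 * k + 2 := rfl
  unfold interleave
  split_ifs with h1 h2
  · omega
  · congr 1; ext; simp only [hk]; omega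
  · omega

/-- The slice `p = q = 1` (index `0` of `Fin n`) of an order-`(2d+2)` tensor. -/
def padSlice (X : (Fin (2 * d + 2) → Fin n) → F) :
    Matrix (Fin d → Fin n) (Fin d → Fin n) F :=
  fun i j => X (interleave i j)

@[simp] theorem padSlice_padded (M : Matrix (Fin d → Fin n) (Fin d → Fin n) F) :
    padSlice (padded M) = M := by
  ext i j
  simp [padSlice, padded_apply]

theorem padSlice_sum {ι : Type*} (s : Finset ι) (X : ι → (Fin (2 * d + 2) → Fin n) → F) :
    padSlice (∑ i ∈ s, X i) = ∑ i ∈ s, padSlice (X i) := by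
  ext i j
  simp [padSlice, Matrix.sum_apply]

theorem ptrans_padSlice (a b : Bool) (α : Fin d → Bool) (X : (Fin (2 * d + 2) → Fin n) → F) :
    ptrans (trueSet α) (padSlice X) =
      (flat (ptI d a b α) X).submatrix (fun i => interleave i i) (fun j => interleave j j) := by
  ext i j
  simp only [ptrans, padSlice, flat, submatrix_apply]
  congr 1
  refine funext_coord ?_ ?_ (fun k => ?_) (fun k => ?_) <;>
    simp only [interleave_padFirst, interleave_padLast, interleave_rowCoord, interleave_colCoord,
      padFirst_mem_ptI, padLast_mem_ptI, rowCoord_mem_ptI, colCoord_mem_ptI, ite_self,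
      mem_trueSet]
  all_goals cases α k <;> rfl

theorem rank_flat_padded_le (a b : Bool) (α : Fin d → Bool)
    (N : Matrix (Fin d → Fin n) (Fin d → Fin n) F) :
    (flat (ptI d a b α) (padded N)).rank ≤ (ptrans (trueSet α) N).rank := by
  -- The indicator `1[p = q = 1]` splits into a row mask and a column mask: `a` and `b` decide
  -- whether `p` and `q` are read from the row or from the column index of the flattening.
  refine Matrix.rank_le_of_apply_eq_mul
    (fun x => if (a = true → x padFirst = 0) ∧ (b = false → x padLast = 0) then 1 else 0)
    (fun y => if (a = false → y padFirst = 0) ∧ (b = true → y padLast = 0) then 1 else 0)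
    (fun x k => if α k then x (colCoord k) else x (rowCoord k))
    (fun y k => if α k then y (rowCoord k) else y (colCoord k)) fun x y => ?_
  simp only [flat, padded_apply, ptrans, padFirst_mem_ptI, padLast_mem_ptI, rowCoord_mem_ptI,
    colCoord_mem_ptI, mem_trueSet]
  have hrow : (fun k => if α k = false then x (rowCoord k) else y (rowCoord k)) =
      fun k => if α k = true then y (rowCoord k) else x (rowCoord k) := by
    funext k; cases α k <;> rfl
  cases a <;> cases b <;> simp +contextual [hrow, ite_and, ite_mul, mul_ite]
  split_ifs <;> rfl

theorem PTrank_le_sum_rank_flat (a b : Bool) {M : Matrix (Fin d → Fin n) (Fin d → Fin n) F}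
    {X : (Fin d → Bool) → (Fin (2 * d + 2) → Fin n) → F} (hX : ∑ α, X α = padded M) :
    PTrank M ≤ ∑ α, (flat (ptI d a b α) (X α)).rank := by
  have hM : ∑ α, padSlice (X α) = M := by rw [← padSlice_sum, hX, padSlice_padded]
  refine (PTrank_le_sum_rank_ptrans trueSet _ hM).trans (Finset.sum_le_sum fun α _ => ?_)
  rw [ptrans_padSlice a b]
  exact Matrix.rank_submatrix_le _ _ _

theorem exists_sum_rank_flat_le_PTrank (a b : Bool)
    (M : Matrix (Fin d → Fin n) (Fin d → Fin n) F) :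
    ∃ X : (Fin d → Bool) → (Fin (2 * d + 2) → Fin n) → F,
      ∑ α, X α = padded M ∧ ∑ α, (flat (ptI d a b α) (X α)).rank ≤ PTrank M := by
  obtain ⟨N, hN, hrank⟩ := exists_sum_rank_ptrans_le_PTrank M
  refine ⟨fun α => padded (N α), by rw [← padded_sum, hN], ?_⟩
  exact (Finset.sum_le_sum fun α _ => rank_flat_padded_le a b α (N α)).trans hrank

theorem isLeast_sum_relrk (a b : Bool) (M : Matrix (Fin d → Fin n) (Fin d → Fin n) F) :
    IsLeast {r : ℝ | ∃ X : (Fin d → Bool) → (Fin (2 * d + 2) → Fin n) → F,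
      (∑ α, X α) = padded M ∧ r = ∑ α, relrk n d a b α (X α)}
      ((PTrank M : ℝ) / (n : ℝ) ^ (d + 1)) := by
  have sum_relrk : ∀ X : (Fin d → Bool) → (Fin (2 * d + 2) → Fin n) → F,
      ∑ α, relrk n d a b α (X α) =
        ((∑ α, (flat (ptI d a b α) (X α)).rank : ℕ) : ℝ) / (n : ℝ) ^ (d + 1) := by
    intro X
    simp only [relrk, Nat.cast_sum, Finset.sum_div]
  refine ⟨?_, ?_⟩
  · obtain ⟨X, hX, hrank⟩ := exists_sum_rank_flat_le_PTrank a b M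
    refine ⟨X, hX, ?_⟩
    rw [sum_relrk, le_antisymm (PTrank_le_sum_rank_flat a b hX) hrank]
  · rintro r ⟨X, hX, rfl⟩
    rw [sum_relrk]
    gcongr
    exact PTrank_le_sum_rank_flat a b hX

end PaddedTensor

/-- `PT-rank(M) = n^{d+1} · ρ(PaddedTensor(M))`. -/
theorem stmt15 {F : Type*} [Field F] (n d : ℕ) [NeZero n]
    (M : Matrix (Fin d → Fin n) (Fin d → Fin n) F) :
    (PTrank M : ℝ) = (n : ℝ) ^ (d + 1) * rho n d (padded M) := by
  have hn : (n : ℝ) ^ (d + 1) ≠ 0 := pow_ne_zero _ (Nat.cast_ne_zero.mpr (NeZero.ne n))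
  simp only [rho, fun a b => (isLeast_sum_relrk a b M).csInf_eq, ciSup_const]
  field_simp
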